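/- arXiv:1204.5138 — 3 statements merged into one kernel-verified Lean document; each statement's English description precedes it below -/
import Mathlib

section
/- For every i, j ∈ {1,…,N} and every k ∈ {1,…,n−1}, the operator on V-valued rational functions given by pointwise application of L^+_{i,j}(u) (with u an extra indeterminate on which the symmetric group acts trivially) commutes with the operator s_k^+; similarly, pointwise application of L^−_{i,j}(u) commutes with s_k^−. -/
open scoped BigOperators

noncomputable section

namespace GRTV

/-- The field `ℂ(z_1,…,z_n,h,u)` of rational functions (with the extra indeterminate `u`). -/
abbrev K (n : ℕ) : Type := FractionRing (MvPolynomial (Fin n ⊕ Fin 2) ℂ)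

def z {n : ℕ} (i : Fin n) : K n :=
  algebraMap (MvPolynomial (Fin n ⊕ Fin 2) ℂ) (K n) (MvPolynomial.X (Sum.inl i))

def hvar {n : ℕ} : K n :=
  algebraMap (MvPolynomial (Fin n ⊕ Fin 2) ℂ) (K n) (MvPolynomial.X (Sum.inr 0))

def uvar {n : ℕ} : K n :=
  algebraMap (MvPolynomial (Fin n ⊕ Fin 2) ℂ) (K n) (MvPolynomial.X (Sum.inr 1))

/-- The field automorphism permuting the variables `z_i` by `σ` and fixing `h` and `u`. -/
def permK {n : ℕ} (σ : Equiv.Perm (Fin n)) : K n ≃+* K n :=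
  IsFractionRing.ringEquivOfRingEquiv
    (MvPolynomial.renameEquiv ℂ (Equiv.sumCongr σ (Equiv.refl (Fin 2)))).toRingEquiv

/-- `V ⊗ ℂ(z_1,…,z_n,h,u)` in coordinates. -/
abbrev VV (n N : ℕ) : Type := (Fin n → Fin N) → K n

/-- `ℂ^N ⊗ V` (coefficients in `ℂ(z,h,u)`) in coordinates. -/
abbrev W (n N : ℕ) : Type := (Fin N × (Fin n → Fin N)) → K n

def sign' {n : ℕ} (ε : Bool) : K n := if ε then hvar else -hvar

def fin1 {n : ℕ} (i : ℕ) (hi : i + 1 < n) : Fin n := ⟨i, Nat.lt_of_succ_lt hi⟩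
def fin2 {n : ℕ} (i : ℕ) (hi : i + 1 < n) : Fin n := ⟨i + 1, hi⟩

/-- The operator `s_i^±` (`ε = true` for `+`, `ε = false` for `−`). -/
def sOp {n N : ℕ} (ε : Bool) (i : ℕ) (hi : i + 1 < n) (f : VV n N) : VV n N :=
  fun m =>
    ((z (fin1 i hi) - z (fin2 i hi)) *
          permK (Equiv.swap (fin1 i hi) (fin2 i hi))
            (f (m ∘ ⇑(Equiv.swap (fin1 i hi) (fin2 i hi))))
        - sign' ε * permK (Equiv.swap (fin1 i hi) (fin2 i hi)) (f m))
      / (z (fin1 i hi) - z (fin2 i hi))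
    + sign' ε / (z (fin1 i hi) - z (fin2 i hi)) * f m

/-- The factor `(w − z_a + h P^{(0,a)})` acting on `ℂ^N ⊗ V`. -/
def fac0 {n N : ℕ} (w : K n) (a : Fin n) (f : W n N) : W n N :=
  fun x => (w - z a) * f x + hvar * f (x.2 a, Function.update x.2 a x.1)

/-- `L^±(w)`: `L^+(w) = (w−z_n+hP^{(0,n)})⋯(w−z_1+hP^{(0,1)})` and
`L^−(w) = (w−z_1+hP^{(0,1)})⋯(w−z_n+hP^{(0,n)})`. -/
def Lop {n N : ℕ} (ε : Bool) (w : K n) : W n N → W n N :=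
  if ε then (List.finRange n).foldl (fun g a => fac0 w a ∘ g) id
  else (List.finRange n).foldr (fun a g => fac0 w a ∘ g) id

/-- The matrix entry `L_{i,j}(u) ∈ End(V)`: `L_{i,j} v = π_i (L (e_j ⊗ v))`. -/
def entry {n N : ℕ} (L : W n N → W n N) (i j : Fin N) (v : VV n N) : VV n N :=
  fun m => L (fun x => if x.1 = j then v x.2 else 0) (i, m)

/- Lift `s_k^±` to `ℂ^N ⊗ V`, acting on the `V`-factor only. There it commutes with
every factor `u − z_c + hP^{(0,c)}` for `c ∉ {k, k+1}`, since these do not involve the swapped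
variables, and with the product of the two neighbouring factors taken in the order in which they
occur in `L^±(u)`: a direct computation, which is the Yang–Baxter relation in disguise.
Applying `L^±(u)` to `e_j ⊗ f` and reading off the `i`-th component gives the claim. -/

end GRTV

theorem Function.Commute.list_foldl_comp {α ι : Type*} {T g : α → α} {F : ι → α → α}
    (l : List ι) (hF : ∀ c ∈ l, Function.Commute T (F c)) (hg : Function.Commute T g) :
    Function.Commute T (l.foldl (fun g c => F c ∘ g) g) := by
  induction l generalizing g with
  | nil => exact hg
  | cons c l ih =>
    exact ih (fun d hd => hF d (List.mem_cons_of_mem c hd))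
      ((hF c List.mem_cons_self).comp_right hg)

theorem Function.Commute.list_foldr_comp {α ι : Type*} {T g : α → α} {F : ι → α → α}
    (l : List ι) (hF : ∀ c ∈ l, Function.Commute T (F c)) (hg : Function.Commute T g) :
    Function.Commute T (l.foldr (fun c g => F c ∘ g) g) := by
  induction l with
  | nil => exact hg
  | cons c l ih =>
    exact (hF c List.mem_cons_self).comp_right (ih fun d hd => hF d (List.mem_cons_of_mem c hd))

theorem List.finRange_eq_take_append_cons_cons_drop {n : ℕ} (k : ℕ) (hk : k + 1 < n) :
    List.finRange n = (List.finRange n).take k ++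
      ⟨k, by omega⟩ :: ⟨k + 1, hk⟩ :: (List.finRange n).drop (k + 2) := by
  conv_lhs => rw [← List.take_append_drop k (List.finRange n)]
  rw [List.drop_eq_getElem_cons (by simp; omega), List.drop_eq_getElem_cons (by simp; omega)]
  simp

namespace GRTV

variable {n N : ℕ}

theorem permK_algebraMap (σ : Equiv.Perm (Fin n)) (p : MvPolynomial (Fin n ⊕ Fin 2) ℂ) :
    permK σ (algebraMap _ (K n) p) =
      algebraMap _ (K n) (MvPolynomial.rename (Equiv.sumCongr σ (Equiv.refl (Fin 2))) p) := by
  simp [permK]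

@[simp] theorem permK_z (σ : Equiv.Perm (Fin n)) (i : Fin n) : permK σ (z i) = z (σ i) := by
  simp [z, permK_algebraMap]

@[simp] theorem permK_hvar (σ : Equiv.Perm (Fin n)) : permK σ (hvar : K n) = hvar := by
  simp [hvar, permK_algebraMap]

@[simp] theorem permK_uvar (σ : Equiv.Perm (Fin n)) : permK σ (uvar : K n) = uvar := by
  simp [uvar, permK_algebraMap]

theorem z_injective : Function.Injective (z (n := n)) := fun _ _ h =>
  Sum.inl_injective <| MvPolynomial.X_injective <|
    IsFractionRing.injective (MvPolynomial (Fin n ⊕ Fin 2) ℂ) (K n) h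

theorem z_sub_z_ne_zero {a b : Fin n} (hab : a ≠ b) : z a - z b ≠ 0 :=
  sub_ne_zero.mpr (z_injective.ne hab)

/- Every index function reached from `m` by updates at `a`, `b` and by precomposition with
`swap a b` has the form `updatePair a b m x y`; rewriting into this normal form lets `simp`
match the arguments of `g` on the two sides of the commutation relations below. -/
def updatePair (a b : Fin n) (m : Fin n → Fin N) (x y : Fin N) : Fin n → Fin N :=
  Function.update (Function.update m a x) b y

section UpdatePair

variable {a b : Fin n}

theorem updatePair_apply_left (hab : a ≠ b) (m : Fin n → Fin N) (x y : Fin N) :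
    updatePair a b m x y a = x := by
  simp [updatePair, hab]

theorem updatePair_apply_right (m : Fin n → Fin N) (x y : Fin N) :
    updatePair a b m x y b = y := by
  simp [updatePair]

theorem updatePair_updatePair (m : Fin n → Fin N) (x y x' y' : Fin N) :
    updatePair a b (updatePair a b m x y) x' y' = updatePair a b m x' y' := by
  funext c
  simp only [updatePair, Function.update_apply]
  split_ifs <;> simp_all

theorem update_left_eq_updatePair (hab : a ≠ b) (m : Fin n → Fin N) (x : Fin N) :
    Function.update m a x = updatePair a b m x (m b) := by
  funext c
  simp only [updatePair, Function.update_apply]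
  split_ifs <;> simp_all

theorem update_right_eq_updatePair (a : Fin n) (m : Fin n → Fin N) (y : Fin N) :
    Function.update m b y = updatePair a b m (m a) y := by
  funext c
  simp only [updatePair, Function.update_apply]
  split_ifs <;> simp_all

theorem comp_swap_eq_updatePair (m : Fin n → Fin N) :
    m ∘ Equiv.swap a b = updatePair a b m (m b) (m a) := by
  funext c
  simp only [updatePair, Function.comp_apply, Function.update_apply, Equiv.swap_apply_def]
  split_ifs <;> simp_all

end UpdatePair

/-- The operator `s^±` of the transposition `(a b)`, acting on the `V`-factor of `ℂ^N ⊗ V`. -/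
def sW (ε : Bool) (a b : Fin n) (g : W n N) : W n N := fun x =>
  ((z a - z b) * permK (Equiv.swap a b) (g (x.1, x.2 ∘ Equiv.swap a b))
      - sign' ε * permK (Equiv.swap a b) (g x)) / (z a - z b)
    + sign' ε / (z a - z b) * g x

/-- The vector `e_j ⊗ v` of `ℂ^N ⊗ V`. -/
def tensorBasis (j : Fin N) (v : VV n N) : W n N := fun x => if x.1 = j then v x.2 else 0

theorem sW_tensorBasis (ε : Bool) (k : ℕ) (hk : k + 1 < n) (j : Fin N) (v : VV n N) :
    sW ε (fin1 k hk) (fin2 k hk) (tensorBasis j v) = tensorBasis j (sOp ε k hk v) := by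
  funext ⟨p, m⟩
  by_cases hp : p = j <;> simp [sW, sOp, tensorBasis, hp]

section Commutation

variable {a b : Fin n} {w : K n}

theorem commute_sW_fac0_of_ne (ε : Bool) (hab : a ≠ b) (hw : permK (Equiv.swap a b) w = w)
    {c : Fin n} (hca : c ≠ a) (hcb : c ≠ b) :
    Function.Commute (sW ε a b) (fac0 w c : W n N → W n N) := by
  intro g
  funext ⟨p, m⟩
  simp only [fac0, sW, Function.update_comp_equiv, Equiv.symm_swap, Function.comp_apply,
    Equiv.swap_apply_of_ne_of_ne hca hcb, map_add, map_mul, map_sub, permK_z, permK_hvar, hw]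
  field_simp [z_sub_z_ne_zero hab]
  ring

theorem commute_sW_true_fac0_pair (hab : a ≠ b) (hw : permK (Equiv.swap a b) w = w) :
    Function.Commute (sW true a b) (fac0 w b ∘ fac0 w a : W n N → W n N) := by
  intro g
  funext ⟨p, m⟩
  simp only [Function.comp_apply, fac0, sW, sign', if_true, comp_swap_eq_updatePair,
    update_left_eq_updatePair hab, update_right_eq_updatePair a, updatePair_updatePair,
    updatePair_apply_left hab, updatePair_apply_right, map_add, map_mul, map_sub, permK_z,
    permK_hvar, hw, Equiv.swap_apply_left, Equiv.swap_apply_right]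
  field_simp [z_sub_z_ne_zero hab]
  ring

theorem commute_sW_false_fac0_pair (hab : a ≠ b) (hw : permK (Equiv.swap a b) w = w) :
    Function.Commute (sW false a b) (fac0 w a ∘ fac0 w b : W n N → W n N) := by
  intro g
  funext ⟨p, m⟩
  simp only [Function.comp_apply, fac0, sW, sign', Bool.false_eq_true, if_false,
    comp_swap_eq_updatePair, update_left_eq_updatePair hab, update_right_eq_updatePair a,
    updatePair_updatePair, updatePair_apply_left hab, updatePair_apply_right, map_add,
    map_mul, map_sub, permK_z, permK_hvar, hw, Equiv.swap_apply_left, Equiv.swap_apply_right]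
  field_simp [z_sub_z_ne_zero hab]
  ring

theorem commute_sW_Lop (ε : Bool) (k : ℕ) (hk : k + 1 < n)
    (hw : permK (Equiv.swap (fin1 k hk) (fin2 k hk)) w = w) :
    Function.Commute (sW ε (fin1 k hk) (fin2 k hk)) (Lop ε w : W n N → W n N) := by
  set a := fin1 k hk
  set b := fin2 k hk
  have hab : a ≠ b := by simp [a, b, fin1, fin2]
  obtain ⟨l₁, l₂, hsplit⟩ : ∃ l₁ l₂, List.finRange n = l₁ ++ a :: b :: l₂ :=
    ⟨_, _, List.finRange_eq_take_append_cons_cons_drop k hk⟩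
  have hnodup : (a :: b :: (l₁ ++ l₂)).Nodup := by
    have hfin := List.nodup_finRange n
    rw [hsplit] at hfin
    exact (List.perm_middle.trans (.cons a List.perm_middle)).nodup_iff.mp hfin
  have hfar : ∀ c ∈ l₁ ++ l₂,
      Function.Commute (sW ε a b) (fac0 w c : W n N → W n N) := by
    intro c hc
    simp only [List.nodup_cons, List.mem_cons, not_or] at hnodup
    exact commute_sW_fac0_of_ne ε hab hw (ne_of_mem_of_not_mem hc hnodup.1.2)
      (ne_of_mem_of_not_mem hc hnodup.2.1)
  simp only [List.forall_mem_append] at hfar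
  cases ε with
  | true =>
    simp only [Lop, if_true, hsplit, List.foldl_append, List.foldl_cons]
    exact .list_foldl_comp _ hfar.2 <|
      (commute_sW_true_fac0_pair hab hw).comp_right (.list_foldl_comp _ hfar.1 .id_right)
  | false =>
    simp only [Lop, Bool.false_eq_true, if_false, hsplit, List.foldr_append, List.foldr_cons]
    exact .list_foldr_comp _ hfar.1 <|
      (commute_sW_false_fac0_pair hab hw).comp_right (.list_foldr_comp _ hfar.2 .id_right)

end Commutation

/-- pointwise application of the matrix entry `L^±_{i,j}(u)` commutes with
the operator `s_k^±` (the symmetric group acting trivially on `u`). -/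
theorem statement13 (n N : ℕ) (ε : Bool) (i j : Fin N) (k : ℕ) (hk : k + 1 < n)
    (f : VV n N) :
    sOp ε k hk (entry (Lop ε uvar) i j f) = entry (Lop ε uvar) i j (sOp ε k hk f) := by
  funext m
  change sW ε (fin1 k hk) (fin2 k hk) (Lop ε uvar (tensorBasis j f)) (i, m) =
    Lop ε uvar (tensorBasis j (sOp ε k hk f)) (i, m)
  rw [commute_sW_Lop ε k hk (permK_uvar _), sW_tensorBasis]

end GRTV
end
end

section
/- Let κ_1,…,κ_n be pairwise distinct. Then Ŵ^κ(u,x) = det( (u·1 − C)(x·1 − Q) − hQ ) · ∏_{1≤i<j≤n}(κ_i − κ_j), where Q = diag(κ_1,…,κ_n) and C is the trigonometric Calogero–Moser matrix. -/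
/-!
Subtracting `x` times each column of `Ŵ` from the previous one clears its first row except for a
`1` in the corner, leaving an `n × n` minor. Reading the columns of that minor as the monomials
`t ^ (n - 1 - j)` evaluated at the nodes `κ i`, it factors as `(h x + (Q - x) L) V` with `V` the
reversed Vandermonde matrix and `L = diag(b) + h Q D`, where `D` is the matrix of differentiation in
Lagrange coordinates, so that `Q D` is the Euler operator `t d/dt`. Conjugation by
`diag(κ i / w i)`, with `w` the barycentric weights, turns `Lᵀ` into `(u + h) - C`; hence
`det (h x + (Q - x) L) = (-1)^n det ((u - C)(x - Q) - hQ)` when `Q` is invertible, and in general by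
continuity in a common shift of the `κ i`.
-/

open scoped BigOperators

noncomputable section

namespace GRTV

/-- The `(n+1) × (n+1)` determinant `Ŵ^κ(u,x)`: rows and columns are indexed by
`0,…,n`; the `(0,j)` entry is `x^{n−j}` and for `i ≥ 1` the `(i,j)` entry is
`κ_i^{n−j} (u − x_i + h(i−j))`. -/
def What (n : ℕ) (κ xv : Fin n → ℂ) (h u x : ℂ) : Matrix (Fin (n+1)) (Fin (n+1)) ℂ :=
  Matrix.of fun i j =>
    if hi : (i : ℕ) = 0 then x ^ (n - (j : ℕ))
    else
      κ (⟨(i : ℕ) - 1, by omega⟩ : Fin n) ^ (n - (j : ℕ)) *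
        (u - xv (⟨(i : ℕ) - 1, by omega⟩ : Fin n)
          + h * (((i : ℕ) : ℂ) - ((j : ℕ) : ℂ)))

/-- The trigonometric Calogero–Moser matrix `C`. -/
def CM (n : ℕ) (κ xv : Fin n → ℂ) (h : ℂ) : Matrix (Fin n) (Fin n) ℂ :=
  Matrix.of fun i j =>
    if i = j then
      xv i - h * (∑ k ∈ Finset.univ.filter (fun k : Fin n => k < i), κ i / (κ i - κ k))
          - h * (∑ k ∈ Finset.univ.filter (fun k : Fin n => i < k), κ k / (κ i - κ k))
    else h * κ i / (κ i - κ j)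

open Matrix Finset Polynomial

section NodalDerivative

variable {F ι : Type*} [Field F] [Fintype ι] [DecidableEq ι] {v : ι → F}

def nodalDerivMatrix (v : ι → F) : Matrix ι ι F :=
  of fun i k => (derivative (Lagrange.basis univ v k)).eval (v i)

theorem nodalDerivMatrix_mulVec (hv : Function.Injective v) {p : F[X]}
    (hp : p.degree < Fintype.card ι) :
    nodalDerivMatrix v *ᵥ (fun k => p.eval (v k)) = fun i => (derivative p).eval (v i) := by
  ext i
  conv_rhs => rw [Lagrange.eq_interpolate (f := p) (s := univ) hv.injOn (by simpa using hp)]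
  simp [Lagrange.interpolate_apply, mulVec, dotProduct, nodalDerivMatrix, eval_finsetSum,
    mul_comm]

theorem nodalDerivMatrix_apply_self (hv : Function.Injective v) (i : ι) :
    nodalDerivMatrix v i i = ∑ j ∈ univ.erase i, (v i - v j)⁻¹ := by
  rw [nodalDerivMatrix, of_apply, Lagrange.basis, derivative_prod_finset, eval_finsetSum]
  refine sum_congr rfl fun j hj => ?_
  rw [eval_mul, eval_prod, prod_eq_one fun a ha => Lagrange.eval_basisDivisor_left_of_ne
    (hv.ne (mem_erase.1 (mem_of_mem_erase ha)).1.symm)]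
  simp [Lagrange.basisDivisor]

theorem nodalDerivMatrix_apply_of_ne (hv : Function.Injective v) {i k : ι} (hik : i ≠ k) :
    nodalDerivMatrix v i k =
      Lagrange.nodalWeight univ v k / (Lagrange.nodalWeight univ v i * (v i - v k)) := by
  have hi : i ∈ univ.erase k := mem_erase.2 ⟨hik, mem_univ i⟩
  rw [nodalDerivMatrix, of_apply, Lagrange.basis_eq_prod_sub_inv_mul_nodal_div (mem_univ k),
    ← Lagrange.nodal_erase_eq_nodal_div (mem_univ k), derivative_C_mul, eval_mul, eval_C,
    Lagrange.eval_nodal_derivative_eval_node_eq hi, Lagrange.eval_nodal,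
    Lagrange.nodalWeight, Lagrange.nodalWeight, erase_right_comm,
    ← mul_prod_erase _ _ (mem_erase.2 ⟨hik.symm, mem_univ k⟩)]
  simp only [prod_inv_distrib]
  have : ∏ j ∈ (univ.erase i).erase k, (v i - v j) ≠ 0 :=
    prod_ne_zero_iff.2 fun j hj => sub_ne_zero.2 (hv.ne (mem_erase.1 (mem_of_mem_erase hj)).1.symm)
  have : v i - v k ≠ 0 := sub_ne_zero.2 (hv.ne hik)
  field_simp

theorem nodalDerivMatrix_add_const (hv : Function.Injective v) (t : F) :
    nodalDerivMatrix (fun i => v i + t) = nodalDerivMatrix v := by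
  have hvt : Function.Injective fun i => v i + t := fun a b hab => hv (add_right_cancel hab)
  ext i k
  rcases eq_or_ne i k with rfl | hik
  · simp [nodalDerivMatrix_apply_self, hv, hvt]
  · simp [nodalDerivMatrix_apply_of_ne, hv, hvt, hik, Lagrange.nodalWeight]

theorem diagonal_mul_nodalDerivMatrix_mul_projVandermonde {n : ℕ} {v : Fin n → F}
    (hv : Function.Injective v) :
    diagonal v * nodalDerivMatrix v * projVandermonde 1 v =
      projVandermonde 1 v * diagonal fun j => ((j.rev : ℕ) : F) := by
  ext i j
  have hderiv := congrFun (nodalDerivMatrix_mulVec hv (p := X ^ (j.rev : ℕ))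
    (by simpa using j.rev.is_lt)) i
  simp only [mulVec, dotProduct, derivative_X_pow, eval_mul, eval_C, eval_pow, eval_X] at hderiv
  rw [Matrix.mul_assoc, diagonal_mul, mul_diagonal, mul_apply]
  simp only [projVandermonde_apply, Pi.one_apply, one_pow, one_mul, hderiv]
  generalize (j.rev : ℕ) = m
  cases m with
  | zero => simp
  | succ m =>
    simp only [Nat.cast_add, Nat.cast_one, add_tsub_cancel_right, pow_succ]
    ring

end NodalDerivative

theorem det_projVandermonde_one {R : Type*} [CommRing R] {n : ℕ} (v : Fin n → R) :
    (projVandermonde 1 v).det =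
      ∏ p ∈ univ.filter (fun p : Fin n × Fin n => p.1 < p.2), (v p.1 - v p.2) := by
  rw [det_projVandermonde, prod_finset_product _ univ (fun i => Ioi i) (by simp)]
  simp

/-- Column operations `col j ↦ col j - x • col (j + 1)` clear a first row `x ^ (n - j)` except
for its last entry `1`. -/
theorem det_eq_neg_one_pow_mul_det_minor {R : Type*} [CommRing R] {n : ℕ}
    (A : Matrix (Fin (n + 1)) (Fin (n + 1)) R) (x : R) (hA : ∀ j, A 0 j = x ^ (n - j)) :
    A.det = (-1) ^ n * (of fun i j : Fin n => A i.succ j.castSucc - x * A i.succ j.succ).det := by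
  set T : Matrix (Fin (n + 1)) (Fin (n + 1)) R :=
    of fun k j => (if k = j then 1 else 0) - if (k : ℕ) = j + 1 then x else 0
  have hT : T.det = 1 := by
    rw [det_of_isLowerTriangular T fun i j hij => ?_]
    · simp [T]
    · have : (i : ℕ) < j := hij
      simp [T, Fin.ne_of_lt this, show (i : ℕ) ≠ j + 1 by omega]
  have hAT : ∀ r c, (A * T) r c = A r c -
      ∑ k : Fin (n + 1), if (k : ℕ) = c + 1 then A r k * x else 0 := by
    intro r c
    simp [T, mul_apply, mul_sub, sum_sub_distrib]
  have hcol : ∀ r (j : Fin n), (A * T) r j.castSucc = A r j.castSucc - x * A r j.succ := by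
    intro r j
    rw [hAT, sum_eq_single j.succ]
    · simp [mul_comm]
    · exact fun k _ hk => if_neg fun h => hk (Fin.ext h)
    · simp
  have hlast : ∀ r, (A * T) r (Fin.last n) = A r (Fin.last n) := by
    intro r
    rw [hAT, sum_eq_zero fun k _ => if_neg (by simp only [Fin.val_last]; omega), sub_zero]
  rw [(by rw [det_mul, hT, mul_one] : A.det = (A * T).det), det_succ_row_zero,
    sum_eq_single (Fin.last n)]
  · simp [Fin.succAbove_last, hlast, hA, submatrix, hcol]
  · intro j _ hj
    obtain ⟨j, rfl⟩ := Fin.exists_castSucc_eq.2 hj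
    rw [hcol, hA, hA, Fin.val_castSucc, Fin.val_succ, show n - j = n - (j + 1) + 1 by omega,
      pow_succ]
    ring
  · simp

def cmPencil (n : ℕ) (κ xv : Fin n → ℂ) (h u x : ℂ) : Matrix (Fin n) (Fin n) ℂ :=
  (u • (1 : Matrix (Fin n) (Fin n) ℂ) - CM n κ xv h) *
      (x • (1 : Matrix (Fin n) (Fin n) ℂ) - Matrix.diagonal κ)
    - h • Matrix.diagonal κ

/-- `h` times the Euler operator `t d/dt` in node coordinates, plus a diagonal; the shift
`h (i + 2 - n)` comes from the term `h (i - j)` of `Ŵ` once its columns are reversed. -/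
def eulerLax (n : ℕ) (κ xv : Fin n → ℂ) (h u : ℂ) : Matrix (Fin n) (Fin n) ℂ :=
  diagonal (fun i => u - xv i + h * ((i : ℂ) + 2 - n)) + h • (diagonal κ * nodalDerivMatrix κ)

section CalogeroMoser

variable {n : ℕ} {κ : Fin n → ℂ} (xv : Fin n → ℂ) (h u x : ℂ)

theorem What_succ (i : Fin n) (c : Fin (n + 1)) :
    What n κ xv h u x i.succ c =
      κ i ^ (n - (c : ℕ)) * (u - xv i + h * ((i : ℂ) + 1 - (c : ℂ))) := by
  simp only [What, of_apply, Fin.val_succ, dif_neg (Nat.succ_ne_zero _), Nat.add_sub_cancel,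
    Fin.eta]
  push_cast
  ring

theorem What_minor_eq_mul_projVandermonde (hκ : Function.Injective κ) :
    (of fun i j : Fin n =>
        What n κ xv h u x i.succ j.castSucc - x * What n κ xv h u x i.succ j.succ) =
      ((h * x) • 1 + diagonal (fun i => κ i - x) * eulerLax n κ xv h u) *
          projVandermonde 1 κ := by
  have hL : eulerLax n κ xv h u * projVandermonde 1 κ =
      diagonal (fun i => u - xv i + h * ((i : ℂ) + 2 - n)) * projVandermonde 1 κ +
        h • (projVandermonde 1 κ * diagonal fun j => ((j.rev : ℕ) : ℂ)) := by
    rw [eulerLax, Matrix.add_mul, Matrix.smul_mul,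
      diagonal_mul_nodalDerivMatrix_mul_projVandermonde hκ]
  ext i j
  rw [Matrix.add_mul, Matrix.mul_assoc, hL]
  simp only [of_apply, What_succ, Matrix.add_apply, Matrix.smul_apply, Matrix.smul_mul,
    diagonal_mul, mul_diagonal, Matrix.mul_add, Matrix.mul_smul,
    projVandermonde_apply, Pi.one_apply, one_pow, one_mul, Fin.val_rev, Fin.val_castSucc,
    Fin.val_succ, smul_eq_mul]
  have hj : (j : ℕ) < n := j.is_lt
  rw [show n - (j : ℕ) = n - (j + 1) + 1 by omega, pow_succ,
    Nat.cast_sub (by omega : (j : ℕ) + 1 ≤ n)]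
  push_cast
  ring

theorem eulerLax_apply_self (hκ : Function.Injective κ) (i : Fin n) :
    eulerLax n κ xv h u i i = u + h - CM n κ xv h i i := by
  have hi : (i : ℕ) < n := i.is_lt
  have hne : ∀ k, k ≠ i → κ i - κ k ≠ 0 := fun k hk => sub_ne_zero.2 (hκ.ne hk.symm)
  have hsplit : ∑ k ∈ univ.erase i, κ i / (κ i - κ k) =
      ∑ k ∈ Iio i, κ i / (κ i - κ k) + ∑ k ∈ Ioi i, κ i / (κ i - κ k) := by
    rw [← sum_union (disjoint_left.2 fun k hk hk' => (mem_Iio.1 hk).asymm (mem_Ioi.1 hk'))]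
    congr 1
    ext k
    simp only [mem_erase, mem_union, mem_Iio, mem_Ioi, mem_univ, and_true]
    exact ne_iff_lt_or_gt
  have hIoi : ∑ k ∈ Ioi i, κ i / (κ i - κ k) =
      ∑ k ∈ Ioi i, κ k / (κ i - κ k) + ((n : ℂ) - 1 - i) := by
    rw [sum_congr rfl fun k hk => (show κ i / (κ i - κ k) = κ k / (κ i - κ k) + 1 by
      field_simp [hne k (mem_Ioi.1 hk).ne']; ring), sum_add_distrib, sum_const, Fin.card_Ioi,
      nsmul_one, Nat.cast_sub (by omega : (i : ℕ) ≤ n - 1), Nat.cast_sub (by omega : 1 ≤ n)]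
    push_cast
    ring
  simp only [eulerLax, CM, Matrix.add_apply, Matrix.smul_apply, diagonal_apply_eq, diagonal_mul,
    of_apply, if_true, nodalDerivMatrix_apply_self hκ, mul_sum, ← div_eq_mul_inv,
    filter_gt_eq_Iio, filter_lt_eq_Ioi, hsplit, hIoi, smul_eq_mul]
  rw [← mul_sum, ← mul_sum]
  ring

theorem diagonal_mul_eulerLax_transpose (hκ : Function.Injective κ) :
    diagonal (fun i => κ i / Lagrange.nodalWeight univ κ i) * (eulerLax n κ xv h u)ᵀ =
      ((u + h) • 1 - CM n κ xv h) * diagonal fun i => κ i / Lagrange.nodalWeight univ κ i := by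
  have hw : ∀ i, Lagrange.nodalWeight univ κ i ≠ 0 :=
    fun i => Lagrange.nodalWeight_ne_zero hκ.injOn (mem_univ i)
  ext i j
  simp only [diagonal_mul, mul_diagonal, transpose_apply]
  rcases eq_or_ne i j with rfl | hij
  · rw [eulerLax_apply_self xv h u hκ]
    simp only [Matrix.sub_apply, Matrix.smul_apply, one_apply_eq, smul_eq_mul, mul_one]
    ring
  · simp only [eulerLax, CM, Matrix.add_apply, Matrix.smul_apply, Matrix.sub_apply,
      diagonal_apply_ne _ hij.symm, diagonal_mul, nodalDerivMatrix_apply_of_ne hκ hij.symm,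
      one_apply_ne hij, of_apply, if_neg hij, smul_eq_mul, zero_add, mul_zero, zero_sub]
    field_simp [hw i, hw j, sub_ne_zero.2 (hκ.ne hij), sub_ne_zero.2 (hκ.ne hij.symm)]
    ring

theorem neg_cmPencil :
    -cmPencil n κ xv h u x =
      (h * x) • 1 + ((u + h) • 1 - CM n κ xv h) * diagonal fun i => κ i - x := by
  rw [cmPencil, smul_one_eq_diagonal x]
  ext i j
  simp only [diagonal_sub, Matrix.neg_apply, Matrix.sub_apply, Matrix.add_apply, mul_diagonal,
    Matrix.smul_apply, one_apply, diagonal_apply, smul_eq_mul]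
  split_ifs with hij
  · subst hij
    ring
  · ring

theorem det_eulerLax_pencil_of_ne_zero (hκ : Function.Injective κ) (hκ0 : ∀ i, κ i ≠ 0) :
    ((h * x) • 1 + diagonal (fun i => κ i - x) * eulerLax n κ xv h u).det =
      (-1) ^ n * (cmPencil n κ xv h u x).det := by
  set P := diagonal fun i => κ i / Lagrange.nodalWeight univ κ i
  have hP : P.det ≠ 0 := by
    rw [det_diagonal]
    exact prod_ne_zero_iff.2 fun i _ =>
      div_ne_zero (hκ0 i) (Lagrange.nodalWeight_ne_zero hκ.injOn (mem_univ i))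
  have hconj : P * ((h * x) • 1 + diagonal (fun i => κ i - x) * eulerLax n κ xv h u)ᵀ =
      -cmPencil n κ xv h u x * P := by
    rw [neg_cmPencil, transpose_add, transpose_mul, transpose_smul, transpose_one,
      diagonal_transpose, Matrix.mul_add, Matrix.add_mul, ← Matrix.mul_assoc,
      diagonal_mul_eulerLax_transpose xv h u hκ, Matrix.mul_assoc, Matrix.mul_assoc]
    simp only [P, diagonal_mul_diagonal, mul_comm, Matrix.mul_smul, Matrix.smul_mul,
      Matrix.mul_one, Matrix.one_mul]
  have := congrArg det hconj
  rw [det_mul, det_mul, det_transpose, det_neg, Fintype.card_fin, mul_comm] at this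
  exact mul_right_cancel₀ hP this

theorem continuous_CM_add_const :
    Continuous fun t : ℂ => CM n (fun i => κ i + t) xv h := by
  refine continuous_pi fun i => continuous_pi fun j => ?_
  simp only [CM, of_apply, add_sub_add_right_eq_sub]
  split_ifs <;> fun_prop

/-- Both sides are continuous in a common shift `κ + t` of the nodes, and agree whenever all
`κ i + t ≠ 0`. -/
theorem det_eulerLax_pencil (hκ : Function.Injective κ) :
    ((h * x) • 1 + diagonal (fun i => κ i - x) * eulerLax n κ xv h u).det =
      (-1) ^ n * (cmPencil n κ xv h u x).det := by
  have hshift : ∀ t : ℂ, Function.Injective fun i => κ i + t :=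
    fun t a b hab => hκ (add_right_cancel hab)
  have key : (fun t : ℂ => ((h * x) • 1 + diagonal (fun i => κ i + t - x) *
        eulerLax n (fun i => κ i + t) xv h u).det) =
      fun t => (-1) ^ n * (cmPencil n (fun i => κ i + t) xv h u x).det := by
    refine Continuous.ext_on ((Set.finite_range fun i => -κ i).countable.dense_compl ℂ) ?_ ?_
      fun t ht => det_eulerLax_pencil_of_ne_zero xv h u x (hshift t)
        fun i hi => ht ⟨i, by linear_combination -hi⟩
    · simp only [eulerLax, nodalDerivMatrix_add_const hκ]
      fun_prop
    · have := continuous_CM_add_const (κ := κ) xv h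
      simp only [cmPencil]
      fun_prop
  simpa using congrFun key 0

end CalogeroMoser

/-- for pairwise distinct `κ_1,…,κ_n`,
`Ŵ^κ(u,x) = det((u·1 − C)(x·1 − Q) − hQ) · ∏_{i<j} (κ_i − κ_j)`,
where `Q = diag(κ_1,…,κ_n)`. -/
theorem statement18 (n : ℕ) (κ xv : Fin n → ℂ) (h u x : ℂ)
    (hκ : Function.Injective κ) :
    (What n κ xv h u x).det =
      ((u • (1 : Matrix (Fin n) (Fin n) ℂ) - CM n κ xv h) *
          (x • (1 : Matrix (Fin n) (Fin n) ℂ) - Matrix.diagonal κ)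
        - h • Matrix.diagonal κ).det *
        ∏ p ∈ Finset.univ.filter (fun p : Fin n × Fin n => p.1 < p.2), (κ p.1 - κ p.2) := by
  rw [det_eq_neg_one_pow_mul_det_minor _ x fun j => by simp [What],
    What_minor_eq_mul_projVandermonde xv h u x hκ, det_mul, det_eulerLax_pencil xv h u x hκ,
    det_projVandermonde_one, ← mul_assoc, ← mul_assoc, ← mul_pow, neg_one_mul, neg_neg,
    one_pow, one_mul, cmPencil]

end GRTV
end
end

section
/- Assume λ_i > 0 for all i = 1,…,N, and let h → ∞ (|h| → ∞ in ℂ) with r_1,…,r_{N−1} fixed, where κ_1,…,κ_N depend on h as specified. Then W^κ(u) · ∏_{1≤i<j≤N}(κ_i − κ_j)^{−1} → det M(u); in particular, for |h| sufficiently large the κ_i are pairwise distinct so the left-hand side is defined. -/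
/-!
Write `κ_i = c_i h^{d_i}` (`kapCoeff`, `kapDeg`) with `d_0 > ⋯ > d_{N-1} = 0`. The Vandermonde
product is `∏_{i<j} κ_i (1 - κ_j/κ_i)`, asymptotic to `∏_i κ_i^{N-1-i}`. Dividing row `i` of the
Wronskian by `κ_i^{N-1-i}` and conjugating by the diagonal gauge `g_j = ∏_{k<j} κ_k / h^{λ_k}`
turns entry `(i, j)` into a monomial in `h` times `∏_k (u - γ_{i,k} + h(i-j)) / h^{λ_i}`. Because
`h^{λ_i+λ_{i+1}} κ_{i+1}/κ_i = r_i`, the monomial is exactly `1`, resp. `r_i`, on the two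
off-diagonals, while off the three central diagonals its degree is negative since `λ > 0`. So the
gauged matrix tends entrywise to `M(u)`, and the quotient to `det M(u)`.
-/

open scoped BigOperators

noncomputable section

namespace GRTV

/-- `κ_i(h) = ∏_{j=i}^{N−1} h^{λ_j+λ_{j+1}}/r_j` (written `0`-based: `κ_{N-1} = 1` and
`κ_i = ∏_{j ∈ [i, N-1)} h^{λ_j+λ_{j+1}}/r_j`), so that
`h^{λ_i+λ_{i+1}} κ_{i+1}/κ_i = r_i` for all `i`. -/
def kap (N : ℕ) (lam : ℕ → ℕ) (r : ℕ → ℂ) (h : ℂ) (i : Fin N) : ℂ :=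
  ∏ j ∈ Finset.Ico (i : ℕ) (N - 1), (h ^ (lam j + lam (j + 1)) / r j)

/-- The discrete Wronskian
`W^κ(u) = det( κ_i^{N−j} ∏_{k=1}^{λ_i} (u − γ_{i,k} + h(i−j)) )_{i,j=1}^N`
(indices written `0`-based, so the exponent `N−j` becomes `N−1−j`). -/
def Wmat (N : ℕ) (lam : ℕ → ℕ) (γ : ℕ → ℕ → ℂ) (r : ℕ → ℂ) (u h : ℂ) :
    Matrix (Fin N) (Fin N) ℂ :=
  Matrix.of fun i j =>
    kap N lam r h i ^ (N - 1 - (j : ℕ)) *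
      ∏ k ∈ Finset.range (lam i), (u - γ i k + h * (((i : ℕ) : ℂ) - ((j : ℕ) : ℂ)))

/-- The tridiagonal matrix `M(u)`: `M_{i,i} = ∏_{k=1}^{λ_i}(u − γ_{i,k})`,
`M_{i,i+1} = (−1)^{λ_i}`, `M_{i+1,i} = r_i`, and `M_{i,j} = 0` for `|i−j| > 1`. -/
def Mmat (N : ℕ) (lam : ℕ → ℕ) (γ : ℕ → ℕ → ℂ) (r : ℕ → ℂ) (u : ℂ) :
    Matrix (Fin N) (Fin N) ℂ :=
  Matrix.of fun i j =>
    if i = j then ∏ k ∈ Finset.range (lam i), (u - γ i k)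
    else if (i : ℕ) + 1 = (j : ℕ) then (-1 : ℂ) ^ (lam i)
    else if (j : ℕ) + 1 = (i : ℕ) then r j
    else 0

open Filter Topology Bornology Finset

section Asymptotics

variable {𝕜 : Type*} [NormedField 𝕜]

theorem tendsto_pow_div_pow_of_lt {n p : ℕ} (hnp : n < p) :
    Tendsto (fun x : 𝕜 => x ^ n / x ^ p) (cobounded 𝕜) (𝓝 0) := by
  have hlim : Tendsto (fun x : 𝕜 => x⁻¹ ^ (p - n)) (cobounded 𝕜) (𝓝 0) := by
    simpa [zero_pow (Nat.sub_ne_zero_of_lt hnp)] using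
      (tendsto_inv₀_cobounded (α := 𝕜)).pow (p - n)
  refine hlim.congr' ?_
  filter_upwards [eventually_ne_cobounded 0] with x hx
  rw [← Nat.add_sub_cancel' hnp.le, pow_add, div_mul_cancel_left₀ (pow_ne_zero _ hx), inv_pow,
    Nat.add_sub_cancel_left]

theorem tendsto_pow_mul_div_pow_of_lt {f : 𝕜 → 𝕜} {L : 𝕜} {m n p : ℕ}
    (hf : Tendsto (fun x => f x / x ^ m) (cobounded 𝕜) (𝓝 L)) (hp : n + m < p) :
    Tendsto (fun x => x ^ n * f x / x ^ p) (cobounded 𝕜) (𝓝 0) := by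
  have hlim : Tendsto (fun x => x ^ (n + m) / x ^ p * (f x / x ^ m)) (cobounded 𝕜) (𝓝 0) := by
    simpa using (tendsto_pow_div_pow_of_lt (𝕜 := 𝕜) hp).mul hf
  refine hlim.congr' ?_
  filter_upwards [eventually_ne_cobounded 0] with x hx
  field_simp
  ring

theorem tendsto_pow_mul_div_pow_of_eq {f : 𝕜 → 𝕜} {L : 𝕜} {m n p : ℕ}
    (hf : Tendsto (fun x => f x / x ^ m) (cobounded 𝕜) (𝓝 L)) (hp : n + m = p) :
    Tendsto (fun x => x ^ n * f x / x ^ p) (cobounded 𝕜) (𝓝 L) := by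
  refine hf.congr' ?_
  filter_upwards [eventually_ne_cobounded 0] with x hx
  rw [← hp, pow_add, mul_div_mul_left _ _ (pow_ne_zero _ hx)]

theorem tendsto_prod_add_mul_div_pow {ι : Type*} (s : Finset ι) (a : ι → 𝕜) (b : 𝕜) :
    Tendsto (fun x => (∏ k ∈ s, (a k + x * b)) / x ^ #s) (cobounded 𝕜) (𝓝 (b ^ #s)) := by
  have hlim : Tendsto (fun x : 𝕜 => ∏ k ∈ s, (a k * x⁻¹ + b)) (cobounded 𝕜)
      (𝓝 (∏ _k ∈ s, (0 + b))) :=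
    tendsto_finsetProd s fun k _ => by
      simpa using (tendsto_inv₀_cobounded.const_mul (a k)).add_const b
  rw [prod_const, zero_add] at hlim
  refine hlim.congr' ?_
  filter_upwards [eventually_ne_cobounded 0] with x hx
  rw [← prod_const, ← prod_div_distrib]
  refine prod_congr rfl fun k _ => ?_
  field_simp

end Asymptotics

theorem prod_filter_lt_fst {M : Type*} [CommMonoid M] {n : ℕ} (f : Fin n → M) :
    ∏ p ∈ univ.filter (fun p : Fin n × Fin n => p.1 < p.2), f p.1 = ∏ i, f i ^ (n - 1 - i) := by
  rw [← univ_product_univ, prod_filter, prod_product]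
  refine prod_congr rfl fun i _ => ?_
  rw [← prod_filter]
  dsimp only
  rw [prod_const, filter_lt_eq_Ioi, Fin.card_Ioi]

theorem prod_filter_lt_sub_eq {K : Type*} [Field K] {n : ℕ} (f : Fin n → K) (hf : ∀ i, f i ≠ 0) :
    ∏ p ∈ univ.filter (fun p : Fin n × Fin n => p.1 < p.2), (f p.1 - f p.2) =
      (∏ i, f i ^ (n - 1 - i)) *
        ∏ p ∈ univ.filter (fun p : Fin n × Fin n => p.1 < p.2), (1 - f p.2 / f p.1) := by
  rw [← prod_filter_lt_fst, ← prod_mul_distrib]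
  refine prod_congr rfl fun p _ => ?_
  rw [mul_one_sub, mul_div_cancel₀ _ (hf p.1)]

section Kappa

variable (N : ℕ) (lam : ℕ → ℕ) (r : ℕ → ℂ)

def kapCoeff (i : ℕ) : ℂ := ∏ j ∈ Ico i (N - 1), (r j)⁻¹

def kapDeg (i : ℕ) : ℕ := ∑ j ∈ Ico i (N - 1), (lam j + lam (j + 1))

theorem kap_eq_kapCoeff_mul_pow (h : ℂ) (i : Fin N) :
    kap N lam r h i = kapCoeff N r i * h ^ kapDeg N lam i := by
  rw [kap, kapCoeff, kapDeg, prod_div_distrib, prod_pow_eq_pow_sum, prod_inv_distrib,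
    div_eq_mul_inv, mul_comm]

variable {N lam r}

theorem kapCoeff_ne_zero (hr : ∀ j, j + 1 < N → r j ≠ 0) (i : ℕ) : kapCoeff N r i ≠ 0 :=
  prod_ne_zero_iff.2 fun j hj => inv_ne_zero (hr j (by simp at hj; omega))

theorem kapCoeff_succ (hr : ∀ j, j + 1 < N → r j ≠ 0) {i : ℕ} (hi : i + 1 < N) :
    kapCoeff N r (i + 1) = r i * kapCoeff N r i := by
  rw [kapCoeff, kapCoeff, prod_eq_prod_Ico_succ_bot (a := i) (by omega), ← mul_assoc,
    mul_inv_cancel₀ (hr i hi), one_mul]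

theorem kap_ne_zero (hr : ∀ j, j + 1 < N → r j ≠ 0) {h : ℂ} (hh : h ≠ 0) (i : Fin N) :
    kap N lam r h i ≠ 0 := by
  rw [kap_eq_kapCoeff_mul_pow]
  exact mul_ne_zero (kapCoeff_ne_zero hr i) (pow_ne_zero _ hh)

theorem kapDeg_eq_add_kapDeg_succ (i : ℕ) (hi : i + 1 < N) :
    kapDeg N lam i = lam i + lam (i + 1) + kapDeg N lam (i + 1) := by
  rw [kapDeg, kapDeg, sum_eq_sum_Ico_succ_bot (by omega)]

theorem kapDeg_antitone : Antitone (kapDeg N lam) := fun _ _ hij =>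
  sum_le_sum_of_subset (Ico_subset_Ico hij le_rfl)

theorem kapDeg_lt_kapDeg (hlam : ∀ i < N, 0 < lam i) {i j : ℕ} (hij : i < j) (hj : j < N) :
    kapDeg N lam j < kapDeg N lam i := by
  have hsucc : kapDeg N lam i = lam i + lam (i + 1) + kapDeg N lam (i + 1) :=
    kapDeg_eq_add_kapDeg_succ i (by omega)
  have hle : kapDeg N lam j ≤ kapDeg N lam (i + 1) := kapDeg_antitone hij
  have hpos := hlam i (by omega)
  omega

theorem tendsto_kap_div_kap (hlam : ∀ i < N, 0 < lam i) {i j : Fin N} (hij : i < j) :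
    Tendsto (fun h => kap N lam r h j / kap N lam r h i) (cobounded ℂ) (𝓝 0) := by
  have hlim := (tendsto_pow_div_pow_of_lt (𝕜 := ℂ) (kapDeg_lt_kapDeg hlam hij j.isLt)).const_mul
    (kapCoeff N r j / kapCoeff N r i)
  rw [mul_zero] at hlim
  refine hlim.congr fun h => ?_
  rw [kap_eq_kapCoeff_mul_pow, kap_eq_kapCoeff_mul_pow, mul_div_mul_comm]

theorem eventually_injective_kap (hlam : ∀ i < N, 0 < lam i) (hr : ∀ j, j + 1 < N → r j ≠ 0) :
    ∀ᶠ h in cobounded ℂ, Function.Injective (kap N lam r h) := by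
  have hpair : ∀ i j : Fin N, i < j → ∀ᶠ h in cobounded ℂ, kap N lam r h i ≠ kap N lam r h j := by
    intro i j hij
    filter_upwards [(tendsto_kap_div_kap hlam hij).eventually_ne zero_ne_one,
      eventually_ne_cobounded 0] with h hne hh heq
    exact hne (by rw [heq, div_self (kap_ne_zero hr hh j)])
  filter_upwards [eventually_all.2 fun i => eventually_all.2 fun j =>
    eventually_imp_distrib_left.2 (hpair i j)] with h hh i j heq
  by_contra hne
  rcases lt_or_gt_of_ne hne with hij | hji
  · exact hh i j hij heq
  · exact hh j i hji heq.symm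

theorem tendsto_prod_one_sub_kap_div_kap (hlam : ∀ i < N, 0 < lam i) :
    Tendsto (fun h => ∏ p ∈ univ.filter (fun p : Fin N × Fin N => p.1 < p.2),
      (1 - kap N lam r h p.2 / kap N lam r h p.1)) (cobounded ℂ) (𝓝 1) := by
  simpa using tendsto_finsetProd _ fun p hp =>
    (tendsto_kap_div_kap hlam (mem_filter.1 hp).2).const_sub 1

end Kappa

section Gauge

variable (N : ℕ) (lam : ℕ → ℕ) (r : ℕ → ℂ)

def gaugeCoeff (j : ℕ) : ℂ := ∏ k ∈ range j, kapCoeff N r k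

def gaugeDeg (j : ℕ) : ℕ := ∑ k ∈ range j, (lam (k + 1) + kapDeg N lam (k + 1))

/-- `gauge h j = ∏_{k<j} κ_k / h^{λ_k}`, written as a monomial in `h`: for `k + 1 < N`,
`κ_k / h^{λ_k} = kapCoeff k * h ^ (λ_{k+1} + kapDeg (k+1))`. -/
def gauge (h : ℂ) (j : ℕ) : ℂ := gaugeCoeff N r j * h ^ gaugeDeg N lam j

def scaledCoeff (i j : ℕ) : ℂ := gaugeCoeff N r j * kapCoeff N r i ^ (N - 1 - j)

def scaledDeg (i j : ℕ) : ℕ := gaugeDeg N lam j + kapDeg N lam i * (N - 1 - j)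

variable {N lam r}

theorem gaugeDeg_succ (j : ℕ) :
    gaugeDeg N lam (j + 1) = gaugeDeg N lam j + (lam (j + 1) + kapDeg N lam (j + 1)) :=
  sum_range_succ _ _

theorem gaugeCoeff_succ (j : ℕ) : gaugeCoeff N r (j + 1) = gaugeCoeff N r j * kapCoeff N r j :=
  prod_range_succ _ _

theorem gauge_ne_zero (hr : ∀ j, j + 1 < N → r j ≠ 0) {h : ℂ} (hh : h ≠ 0) (j : ℕ) :
    gauge N lam r h j ≠ 0 :=
  mul_ne_zero (prod_ne_zero_iff.2 fun k _ => kapCoeff_ne_zero hr k) (pow_ne_zero _ hh)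

theorem scaledCoeff_ne_zero (hr : ∀ j, j + 1 < N → r j ≠ 0) (i j : ℕ) : scaledCoeff N r i j ≠ 0 :=
  mul_ne_zero (prod_ne_zero_iff.2 fun k _ => kapCoeff_ne_zero hr k)
    (pow_ne_zero _ (kapCoeff_ne_zero hr i))

theorem scaledDeg_self_add (i : ℕ) (hi : i + 1 < N) :
    scaledDeg N lam i (i + 1) + lam i = scaledDeg N lam i i := by
  have hN : N - 1 - i = N - 1 - (i + 1) + 1 := by omega
  rw [scaledDeg, scaledDeg, gaugeDeg_succ, hN, mul_add_one, kapDeg_eq_add_kapDeg_succ i hi]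
  ring

theorem scaledDeg_succ_add (i : ℕ) (hi : i + 1 < N) :
    scaledDeg N lam (i + 1) i + lam (i + 1) = scaledDeg N lam (i + 1) (i + 1) := by
  have hN : N - 1 - i = N - 1 - (i + 1) + 1 := by omega
  rw [scaledDeg, scaledDeg, gaugeDeg_succ, hN, mul_add_one]
  ring

theorem scaledDeg_add_lt_of_add_two_le (hlam : ∀ i < N, 0 < lam i) {i j : ℕ} (hij : i + 2 ≤ j)
    (hj : j < N) : scaledDeg N lam i j + lam i < scaledDeg N lam i i := by
  have hsplit : gaugeDeg N lam j = gaugeDeg N lam (i + 1) +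
      ∑ k ∈ Ico (i + 1) j, (lam (k + 1) + kapDeg N lam (k + 1)) :=
    (sum_range_add_sum_Ico _ (by omega)).symm
  have hlt : ∑ k ∈ Ico (i + 1) j, (lam (k + 1) + kapDeg N lam (k + 1)) <
      ∑ _k ∈ Ico (i + 1) j, kapDeg N lam i := by
    refine sum_lt_sum_of_nonempty (nonempty_Ico.2 (by omega)) fun k hk => ?_
    rw [mem_Ico] at hk
    have hk' : kapDeg N lam k = lam k + lam (k + 1) + kapDeg N lam (k + 1) :=
      kapDeg_eq_add_kapDeg_succ k (by omega)
    have hle : kapDeg N lam k ≤ kapDeg N lam i := kapDeg_antitone (by omega)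
    have hpos := hlam k (by omega)
    omega
  rw [sum_const, Nat.card_Ico, smul_eq_mul] at hlt
  have hN : N - 1 - (i + 1) = (N - 1 - j) + (j - (i + 1)) := by omega
  have hdiag : scaledDeg N lam i (i + 1) + lam i = scaledDeg N lam i i :=
    scaledDeg_self_add i (by omega)
  rw [scaledDeg, scaledDeg, hN, mul_add] at hdiag
  rw [scaledDeg, scaledDeg, ← hdiag, hsplit]
  linarith

theorem scaledDeg_add_lt_of_add_two_le' (hlam : ∀ i < N, 0 < lam i) {i j : ℕ} (hji : j + 2 ≤ i)
    (hi : i < N) : scaledDeg N lam i j + lam i < scaledDeg N lam i i := by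
  have hsplit : gaugeDeg N lam i = gaugeDeg N lam j +
      (∑ k ∈ Ico j (i - 1), (lam (k + 1) + kapDeg N lam (k + 1)) + (lam i + kapDeg N lam i)) := by
    rw [gaugeDeg, gaugeDeg, ← sum_range_add_sum_Ico _ (show j ≤ i by omega),
      show i = i - 1 + 1 by omega, sum_Ico_succ_top (by omega)]
    simp only [Nat.sub_add_cancel (show 1 ≤ i by omega)]
  have hlt : ∑ _k ∈ Ico j (i - 1), kapDeg N lam i <
      ∑ k ∈ Ico j (i - 1), (lam (k + 1) + kapDeg N lam (k + 1)) := by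
    refine sum_lt_sum_of_nonempty (nonempty_Ico.2 (by omega)) fun k hk => ?_
    rw [mem_Ico] at hk
    have hle : kapDeg N lam i ≤ kapDeg N lam (k + 1) := kapDeg_antitone (by omega)
    have hpos := hlam (k + 1) (by omega)
    omega
  rw [sum_const, Nat.card_Ico, smul_eq_mul] at hlt
  have hN : N - 1 - j = (N - 1 - i) + (i - 1 - j) + 1 := by omega
  rw [scaledDeg, scaledDeg, hsplit, hN, mul_add, mul_add, mul_one]
  linarith

theorem scaledCoeff_self_succ (i : ℕ) (hi : i + 1 < N) :
    scaledCoeff N r i (i + 1) = scaledCoeff N r i i := by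
  have hN : N - 1 - i = N - 1 - (i + 1) + 1 := by omega
  rw [scaledCoeff, scaledCoeff, gaugeCoeff_succ, hN, pow_succ]
  ring

theorem scaledCoeff_succ_self (hr : ∀ j, j + 1 < N → r j ≠ 0) (i : ℕ) (hi : i + 1 < N) :
    scaledCoeff N r (i + 1) i = r i * scaledCoeff N r (i + 1) (i + 1) := by
  have hN : N - 1 - i = N - 1 - (i + 1) + 1 := by omega
  rw [scaledCoeff, scaledCoeff, gaugeCoeff_succ, hN, pow_succ, kapCoeff_succ hr hi]
  ring

end Gauge

section ScaledWronskian

variable {N : ℕ} {lam : ℕ → ℕ} {γ : ℕ → ℕ → ℂ} {r : ℕ → ℂ} {u : ℂ}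

def scaledWmat (N : ℕ) (lam : ℕ → ℕ) (γ : ℕ → ℕ → ℂ) (r : ℕ → ℂ) (u h : ℂ) :
    Matrix (Fin N) (Fin N) ℂ :=
  Matrix.of fun i j => (gauge N lam r h i * kap N lam r h i ^ (N - 1 - (i : ℕ)))⁻¹ *
    (gauge N lam r h j * Wmat N lam γ r u h i j)

theorem det_Wmat_eq (hr : ∀ j, j + 1 < N → r j ≠ 0) {h : ℂ} (hh : h ≠ 0) :
    (Wmat N lam γ r u h).det =
      (∏ i, kap N lam r h i ^ (N - 1 - (i : ℕ))) * (scaledWmat N lam γ r u h).det := by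
  have hk := kap_ne_zero (lam := lam) hr hh
  have hg := gauge_ne_zero (lam := lam) hr hh
  rw [show scaledWmat N lam γ r u h = Matrix.of fun (i j : Fin N) =>
      (gauge N lam r h i * kap N lam r h i ^ (N - 1 - (i : ℕ)))⁻¹ *
        Matrix.of (fun (i j : Fin N) => gauge N lam r h j * Wmat N lam γ r u h i j) i j from rfl,
    Matrix.det_mul_column, Matrix.det_mul_row, prod_inv_distrib, prod_mul_distrib]
  have hgprod : ∏ i : Fin N, gauge N lam r h i ≠ 0 := prod_ne_zero_iff.2 fun i _ => hg i
  have hkprod : ∏ i : Fin N, kap N lam r h i ^ (N - 1 - (i : ℕ)) ≠ 0 :=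
    prod_ne_zero_iff.2 fun i _ => pow_ne_zero _ (hk i)
  field_simp

theorem scaledWmat_eventuallyEq (i j : Fin N) :
    (fun h => scaledWmat N lam γ r u h i j) =ᶠ[cobounded ℂ] fun h =>
      scaledCoeff N r i j / scaledCoeff N r i i *
        (h ^ scaledDeg N lam i j * (∏ k ∈ range (lam i), (u - γ i k + h * (((i : ℕ) : ℂ) - j))) /
          h ^ scaledDeg N lam i i) := by
  filter_upwards [eventually_ne_cobounded 0] with h hh
  simp only [scaledWmat, Wmat, Matrix.of_apply, gauge, kap_eq_kapCoeff_mul_pow, scaledCoeff,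
    scaledDeg, mul_pow, ← pow_mul, pow_add]
  field_simp

theorem scaledWmat_apply_self (hr : ∀ j, j + 1 < N → r j ≠ 0) {h : ℂ} (hh : h ≠ 0) (i : Fin N) :
    scaledWmat N lam γ r u h i i = ∏ k ∈ range (lam i), (u - γ i k) := by
  have hk := kap_ne_zero (lam := lam) hr hh i
  have hg := gauge_ne_zero (lam := lam) hr hh i
  simp only [scaledWmat, Wmat, Matrix.of_apply, sub_self, mul_zero, add_zero]
  field_simp

theorem tendsto_prod_div_pow_lam (i j : Fin N) :
    Tendsto (fun h => (∏ k ∈ range (lam i), (u - γ i k + h * (((i : ℕ) : ℂ) - j))) / h ^ lam i)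
      (cobounded ℂ) (𝓝 ((((i : ℕ) : ℂ) - j) ^ lam i)) := by
  simpa using tendsto_prod_add_mul_div_pow (range (lam i)) (fun k => u - γ i k) (((i : ℕ) : ℂ) - j)

theorem tendsto_scaledWmat_apply_of_add_eq {i j : Fin N}
    (hdeg : scaledDeg N lam i j + lam i = scaledDeg N lam i i) :
    Tendsto (fun h => scaledWmat N lam γ r u h i j) (cobounded ℂ)
      (𝓝 (scaledCoeff N r i j / scaledCoeff N r i i * ((((i : ℕ) : ℂ) - j) ^ lam i))) :=
  ((tendsto_pow_mul_div_pow_of_eq (tendsto_prod_div_pow_lam i j) hdeg).const_mul _).congr'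
    (scaledWmat_eventuallyEq i j).symm

theorem tendsto_scaledWmat_apply_of_add_lt {i j : Fin N}
    (hdeg : scaledDeg N lam i j + lam i < scaledDeg N lam i i) :
    Tendsto (fun h => scaledWmat N lam γ r u h i j) (cobounded ℂ) (𝓝 0) := by
  rw [← mul_zero (scaledCoeff N r i j / scaledCoeff N r i i)]
  exact ((tendsto_pow_mul_div_pow_of_lt (tendsto_prod_div_pow_lam i j) hdeg).const_mul _).congr'
    (scaledWmat_eventuallyEq i j).symm

theorem tendsto_scaledWmat_apply (hlam : ∀ i < N, 0 < lam i) (hr : ∀ j, j + 1 < N → r j ≠ 0)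
    (i j : Fin N) :
    Tendsto (fun h => scaledWmat N lam γ r u h i j) (cobounded ℂ) (𝓝 (Mmat N lam γ r u i j)) := by
  rcases eq_or_ne i j with rfl | hne
  · rw [show Mmat N lam γ r u i i = ∏ k ∈ range (lam i), (u - γ i k) by simp [Mmat]]
    refine tendsto_const_nhds.congr' ?_
    filter_upwards [eventually_ne_cobounded 0] with h hh
    exact (scaledWmat_apply_self hr hh i).symm
  by_cases hsup : (i : ℕ) + 1 = j
  · have hi : (i : ℕ) + 1 < N := hsup ▸ j.isLt
    rw [show Mmat N lam γ r u i j = (-1) ^ lam i by simp [Mmat, hne, hsup]]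
    convert tendsto_scaledWmat_apply_of_add_eq (γ := γ) (u := u) (r := r) (i := i) (j := j)
      (by rw [← hsup]; exact scaledDeg_self_add (lam := lam) _ hi) using 2
    rw [← hsup, scaledCoeff_self_succ _ hi, div_self (scaledCoeff_ne_zero hr _ _)]
    push_cast
    ring
  by_cases hsub : (j : ℕ) + 1 = i
  · have hj : (j : ℕ) + 1 < N := hsub ▸ i.isLt
    rw [show Mmat N lam γ r u i j = r j by simp [Mmat, hne, hsup, hsub]]
    convert tendsto_scaledWmat_apply_of_add_eq (γ := γ) (u := u) (r := r) (i := i) (j := j)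
      (by rw [← hsub]; exact scaledDeg_succ_add (lam := lam) _ hj) using 2
    rw [← hsub, scaledCoeff_succ_self hr _ hj, mul_div_cancel_right₀ _ (scaledCoeff_ne_zero hr _ _)]
    push_cast
    ring
  rw [show Mmat N lam γ r u i j = 0 by simp [Mmat, hne, hsup, hsub]]
  refine tendsto_scaledWmat_apply_of_add_lt ?_
  rcases lt_or_gt_of_ne (Fin.val_ne_of_ne hne) with hij | hji
  · exact scaledDeg_add_lt_of_add_two_le hlam (by omega) j.isLt
  · exact scaledDeg_add_lt_of_add_two_le' hlam (by omega) i.isLt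

end ScaledWronskian

theorem statement19_general (N : ℕ) (lam : ℕ → ℕ)
    (hlam : ∀ i < N, 0 < lam i) (γ : ℕ → ℕ → ℂ) (u : ℂ)
    (r : ℕ → ℂ) (hr : ∀ j, j + 1 < N → r j ≠ 0) :
    (∀ᶠ h : ℂ in Bornology.cobounded ℂ, Function.Injective (kap N lam r h)) ∧
    Filter.Tendsto
      (fun h : ℂ => (Wmat N lam γ r u h).det /
        ∏ p ∈ Finset.univ.filter (fun p : Fin N × Fin N => p.1 < p.2),
          (kap N lam r h p.1 - kap N lam r h p.2))
      (Bornology.cobounded ℂ)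
      (nhds (Mmat N lam γ r u).det) := by
  refine ⟨eventually_injective_kap hlam hr, ?_⟩
  have hdet : Tendsto (fun h => (scaledWmat N lam γ r u h).det) (cobounded ℂ)
      (𝓝 (Mmat N lam γ r u).det) :=
    (continuous_id.matrix_det.tendsto _).comp <| tendsto_pi_nhds.2 fun i =>
      tendsto_pi_nhds.2 fun j => tendsto_scaledWmat_apply hlam hr i j
  have hlim := hdet.div (tendsto_prod_one_sub_kap_div_kap (r := r) hlam) one_ne_zero
  rw [div_one] at hlim
  refine hlim.congr' ?_
  filter_upwards [eventually_ne_cobounded 0] with h hh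
  have hk := kap_ne_zero (lam := lam) hr hh
  rw [det_Wmat_eq hr hh, prod_filter_lt_sub_eq _ hk,
    mul_div_mul_left _ _ (prod_ne_zero_iff.2 fun i _ => pow_ne_zero _ (hk i))]
  rfl

/-- if all `λ_i > 0` then, as `|h| → ∞` with `r_1,…,r_{N−1}` fixed,
the `κ_i` are eventually pairwise distinct and
`W^κ(u) ∏_{i<j}(κ_i−κ_j)^{−1} → det M(u)`. -/
theorem statement19 (N : ℕ) (hN : 0 < N) (lam : ℕ → ℕ)
    (hlam : ∀ i < N, 0 < lam i) (γ : ℕ → ℕ → ℂ) (u : ℂ)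
    (r : ℕ → ℂ) (hr : ∀ j, j + 1 < N → r j ≠ 0) :
    (∀ᶠ h : ℂ in Bornology.cobounded ℂ, Function.Injective (kap N lam r h)) ∧
    Filter.Tendsto
      (fun h : ℂ => (Wmat N lam γ r u h).det /
        ∏ p ∈ Finset.univ.filter (fun p : Fin N × Fin N => p.1 < p.2),
          (kap N lam r h p.1 - kap N lam r h p.2))
      (Bornology.cobounded ℂ)
      (nhds (Mmat N lam γ r u).det) :=
  statement19_general N lam hlam γ u r hr

end GRTV

end
end
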